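/- A complete theory T has ATP if there exist a formula φ(x;y) and a strongly indiscernible tree (a_η)_{η∈2^{≤ω}} in a monster model of T such that (1) the partial type {φ(x; a_η) : η ∈ 2^ω} has infinitely many realizations, and (2) for every η ∈ 2^{<ω}, the formula φ(x; a_η) ∧ φ(x; a_{η⌢0}) has only finitely many realizations. -/

import Mathlib

open FirstOrder FirstOrder.Language

universe u v w u_g

namespace NATPPaper

/-- Nodes of the tree `2^{≤ω}`: functions `ℕ → Option Bool` whose domain is an initial
segment of `ℕ` (possibly all of `ℕ`, giving the branches `2^ω`). -/
def TNode : Type := {f : ℕ → Option Bool // ∀ i j : ℕ, i ≤ j → f j ≠ none → f i ≠ none}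

namespace TNode

/-- The tree partial order `⊴` (end-extension / initial segment). -/
def PrefixLE (η ν : TNode) : Prop := ∀ (i : ℕ) (b : Bool), η.1 i = some b → ν.1 i = some b

/-- Comparability in the tree order. -/
def Comparable (η ν : TNode) : Prop := PrefixLE η ν ∨ PrefixLE ν η

/-- Antichain: pairwise incomparable set of nodes. -/
def IsAntichain (X : Set TNode) : Prop := ∀ η ∈ X, ∀ ν ∈ X, η ≠ ν → ¬ Comparable η ν

open Classical in
/-- The meet `η ∧ ν`: the longest common initial segment. -/
noncomputable def meet (η ν : TNode) : TNode :=
  ⟨fun i => if (∀ j ≤ i, η.1 j = ν.1 j ∧ η.1 j ≠ none) then η.1 i else none, by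
    intro i j hij hj
    dsimp only at hj ⊢
    by_cases h : ∀ k ≤ j, η.1 k = ν.1 k ∧ η.1 k ≠ none
    · have hi : ∀ k ≤ i, η.1 k = ν.1 k ∧ η.1 k ≠ none := fun k hk => h k (hk.trans hij)
      rw [if_pos hi]
      exact (h i hij).2
    · rw [if_neg h] at hj
      exact absurd rfl hj⟩

/-- The lexicographic (strict) order on tree nodes. -/
def LexLT (η ν : TNode) : Prop :=
  PrefixLE η ν ∨ ∃ i : ℕ, (∀ j < i, η.1 j = ν.1 j) ∧ η.1 i = some false ∧ ν.1 i = some true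

/-- A branch of the tree: an element of `2^ω`. -/
def IsBranch (η : TNode) : Prop := ∀ i : ℕ, η.1 i ≠ none

/-- A finite node `η ∈ 2^{<ω}`, coded by a list of booleans. -/
def ofList (l : List Bool) : TNode :=
  ⟨fun i => l[i]?, by
    intro i j hij hj
    dsimp only at hj ⊢
    rw [Ne, List.getElem?_eq_none_iff] at hj ⊢
    intro hi
    exact hj (le_trans hi hij)⟩

/-- The branch of `2^ω` determined by `f : ℕ → Bool`. -/
def ofBranch (f : ℕ → Bool) : TNode := ⟨fun i => some (f i), fun _ _ _ h => by simp at h ⊢⟩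

end TNode

/-- The language of trees `{⊴, <_lex, ∧}`: one binary function (meet) and two binary
relations (tree order and lexicographic order). -/
def treeLang : FirstOrder.Language :=
  ⟨fun n => PLift (n = 2), fun n => PLift (n = 2) ⊕ PLift (n = 2)⟩

noncomputable instance : treeLang.Structure TNode where
  funMap {n} f v := TNode.meet (v ⟨0, by have := f.down; omega⟩)
    (v ⟨1, by have := f.down; omega⟩)
  RelMap {n} R v :=
    match R with
    | Sum.inl h => TNode.PrefixLE (v ⟨0, by have := h.down; omega⟩)
        (v ⟨1, by have := h.down; omega⟩)
    | Sum.inr h => TNode.LexLT (v ⟨0, by have := h.down; omega⟩)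
        (v ⟨1, by have := h.down; omega⟩)


variable {L : FirstOrder.Language.{u, v}}


/-- Two nodes of the binary tree `2^{<ω}` (coded as lists of booleans) are comparable if one is
an initial segment (prefix) of the other. -/
def TreeComparable (η ν : List Bool) : Prop := η <+: ν ∨ ν <+: η

/-- A set of nodes of `2^{<ω}` is an antichain if its elements are pairwise incomparable. -/
def IsTreeAntichain (X : Set (List Bool)) : Prop :=
  ∀ η ∈ X, ∀ ν ∈ X, η ≠ ν → ¬ TreeComparable η ν

/-- The pair `(φ(x; y), (a_η)_{η ∈ 2^{<ω}})` witnesses the antichain tree property: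
every (finite) antichain is consistent, while any two distinct comparable nodes are
inconsistent. -/
def ATPWitness {M : Type w} [L.Structure M] {n m : ℕ}
    (φ : L.Formula (Fin n ⊕ Fin m)) (a : List Bool → Fin m → M) : Prop :=
  (∀ X : Finset (List Bool), IsTreeAntichain ↑X →
      ∃ b : Fin n → M, ∀ η ∈ X, φ.Realize (Sum.elim b (a η))) ∧
  (∀ η ν : List Bool, η ≠ ν → TreeComparable η ν →
      ¬ ∃ b : Fin n → M, φ.Realize (Sum.elim b (a η)) ∧ φ.Realize (Sum.elim b (a ν)))

/-- A theory has the antichain tree property (ATP) if some formula `φ(x; y)` has ATP,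
witnessed by a tree-indexed family of parameters in some model. -/
def _root_.FirstOrder.Language.Theory.HasATP (T : L.Theory) : Prop :=
  ∃ (M : Theory.ModelType.{u, v, max u v} T) (n m : ℕ)
    (φ : L.Formula (Fin n ⊕ Fin m)) (a : List Bool → Fin m → M), ATPWitness φ a

/-- A theory is NATP if it does not have the antichain tree property.  (For an incomplete
theory this is equivalent to saying that every completion is NATP.) -/
def _root_.FirstOrder.Language.Theory.IsNATP (T : L.Theory) : Prop := ¬ T.HasATP



/-- A tree-indexed family `(a_η)_{η ∈ 2^{≤ω}}` of `γ`-tuples in `M` is strongly indiscernible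
over `A`: finite tuples of indices with the same quantifier-free type in the tree language
`{⊴, <_lex, ∧}` yield parameter tuples with the same type over `A`. -/
def StronglyIndiscernibleOver (L : FirstOrder.Language.{u, v}) {M : Type w} [L.Structure M]
    {γ : Type u_g} (a : TNode → γ → M) (A : Set M) : Prop :=
  ∀ (n : ℕ) (η ν : Fin n → TNode),
    (∀ φ : treeLang.Formula (Fin n), BoundedFormula.IsQF φ → (φ.Realize η ↔ φ.Realize ν)) →
    ∀ (k : ℕ) (c : Fin k → M), (∀ j, c j ∈ A) →
      ∀ ψ : L.Formula ((Fin n × γ) ⊕ Fin k),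
        (ψ.Realize (Sum.elim (fun p => a (η p.1) p.2) c) ↔
          ψ.Realize (Sum.elim (fun p => a (ν p.1) p.2) c))

/-- `(φ(x; y), (a_η)_{η ∈ 2^{≤ω}})` witnesses ATP: for every subset `X ⊆ 2^{≤ω}`, the partial
type `{φ(x; a_η) : η ∈ X}` is realized iff `X` is an antichain. -/
def ATPWitnessFull {M : Type w} [L.Structure M] {n m : ℕ}
    (φ : L.Formula (Fin n ⊕ Fin m)) (a : TNode → Fin m → M) : Prop :=
  ∀ X : Set TNode,
    (∃ b : Fin n → M, ∀ η ∈ X, φ.Realize (Sum.elim b (a η))) ↔ TNode.IsAntichain X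

/-- `M` is `μ`-saturated (for types in small tuples of variables over small parameter sets):
every finitely satisfiable set of formulas is realized. -/
def Saturated (L : FirstOrder.Language.{u, v}) (μ : Cardinal.{w}) (M : Type w) [L.Structure M] : Prop :=
  ∀ (α β : Type w), Cardinal.mk α < μ → Cardinal.mk β < μ →
    ∀ (p : Set (L.Formula (α ⊕ β))) (v : β → M),
      (∀ F : Finset (L.Formula (α ⊕ β)), ↑F ⊆ p →
          ∃ x : α → M, ∀ φ ∈ F, φ.Realize (Sum.elim x v)) →
      ∃ x : α → M, ∀ φ ∈ p, φ.Realize (Sum.elim x v)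

/-!
Let `k` be the number of solutions of `φ(x; a_⟨⟩) ∧ φ(x; a_⟨0⟩)` and let `ψ(x₀, …, x_k; y)` say
that `x₀, …, x_k` are pairwise distinct solutions of `φ(x; y)`. Two distinct comparable nodes
`u ◁ w` have the quantifier-free type of `(⟨⟩, ⟨0⟩)`, so by indiscernibility
`ψ(x; a_u) ∧ ψ(x; a_w)` is inconsistent. A finite antichain has the quantifier-free type of the
branches obtained by extending each of its nodes by zeros, and all branches share infinitely many
solutions of `φ`, so `{ψ(x; a_η) : η ∈ X}` is consistent for every antichain `X`. Equality of
quantifier-free types is checked through partial isomorphisms between meet-closed sets of nodes.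
-/

namespace TNode

instance : PartialOrder TNode where
  le := PrefixLE
  le_refl _ _ _ h := h
  le_trans _ _ _ hxy hyz i b h := hyz i b (hxy i b h)
  le_antisymm x y hxy hyx := Subtype.ext <| funext fun i => by
    cases hx : x.1 i with
    | some b => exact (hxy i b hx).symm
    | none => cases hy : y.1 i with
      | some b => simpa [hx] using hyx i b hy
      | none => rfl

lemma le_def {x y : TNode} : x ≤ y ↔ ∀ i b, x.1 i = some b → y.1 i = some b := Iff.rfl

lemma apply_eq_of_le {x y : TNode} (h : x ≤ y) {i : ℕ} (hi : x.1 i ≠ none) : y.1 i = x.1 i := by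
  obtain ⟨b, hb⟩ := Option.ne_none_iff_exists'.1 hi
  rw [hb, h i b hb]

noncomputable instance : SemilatticeInf TNode where
  inf := meet
  inf_le_left x y i b h := by
    simp only [meet] at h
    split_ifs at h
    exact h
  inf_le_right x y i b h := by
    simp only [meet] at h
    split_ifs at h with hc
    rwa [← (hc i le_rfl).1]
  le_inf z x y hzx hzy i b hz := by
    show (meet x y).1 i = some b
    have hcommon : ∀ j ≤ i, x.1 j = y.1 j ∧ x.1 j ≠ none := fun j hj => by
      have hzj : z.1 j ≠ none := z.2 j i hj (by simp [hz])
      rw [apply_eq_of_le hzx hzj, apply_eq_of_le hzy hzj]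
      exact ⟨rfl, hzj⟩
    simp only [meet, if_pos hcommon]
    exact hzx i b hz

lemma le_or_le_of_le {x y z : TNode} (hx : x ≤ z) (hy : y ≤ z) : x ≤ y ∨ y ≤ x := by
  have agree : ∀ {x y : TNode}, x ≤ z → y ≤ z → ∀ i b, x.1 i = some b → y.1 i ≠ none →
      y.1 i = some b := fun hx hy i b hxi hyi => by
    rw [← apply_eq_of_le hy hyi, hx i b hxi]
  by_contra! h
  simp only [le_def, not_forall] at h
  obtain ⟨⟨i, b, hxi, hyi⟩, ⟨j, c, hyj, hxj⟩⟩ := h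
  rcases le_total i j with hij | hji
  · exact hyi (agree hx hy i b hxi (y.2 i j hij (by simp [hyj])))
  · exact hxj (agree hy hx j c hyj (x.2 j i hji (by simp [hxi])))

lemma le_of_le_of_agree_below {η ν y : TNode} (hην : η ≤ ν) {i : ℕ} (hi : η.1 i = none)
    (hagree : ∀ j < i, ν.1 j = y.1 j) : η ≤ y := by
  intro j b hj
  have hji : j < i := by
    by_contra! hij
    exact η.2 i j hij (by simp [hj]) hi
  rw [← hagree j hji, hην j b hj]

section Extension

variable {η ν y : TNode}

lemma le_iff_of_le_of_not_le (hην : η ≤ ν) (hy : ¬ η ≤ y) : y ≤ ν ↔ y ≤ η :=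
  ⟨fun h => (le_or_le_of_le hην h).resolve_left hy, fun h => h.trans hην⟩

lemma inf_eq_of_le_of_not_le (hην : η ≤ ν) (hy : ¬ η ≤ y) : ν ⊓ y = η ⊓ y := by
  refine le_antisymm (le_inf ?_ inf_le_right) (inf_le_inf_right y hην)
  exact (le_iff_of_le_of_not_le hην fun h => hy (h.trans inf_le_right)).1 inf_le_left

lemma lexLT_iff_right_of_le_of_not_le (hην : η ≤ ν) (hy : ¬ η ≤ y) :
    LexLT y ν ↔ LexLT y η := by
  constructor
  · rintro (h | ⟨i, hagree, hyi, hνi⟩)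
    · exact Or.inl ((le_iff_of_le_of_not_le hην hy).1 h)
    by_cases hηi : η.1 i = none
    · exact absurd (le_of_le_of_agree_below hην hηi fun j hj => (hagree j hj).symm) hy
    refine Or.inr ⟨i, fun j hj => ?_, hyi, by rwa [← apply_eq_of_le hην hηi]⟩
    rw [hagree j hj, apply_eq_of_le hην (η.2 j i hj.le hηi)]
  · rintro (h | ⟨i, hagree, hyi, hηi⟩)
    · exact Or.inl (le_trans (α := TNode) h hην)
    have hηi' : η.1 i ≠ none := by simp [hηi]
    refine Or.inr ⟨i, fun j hj => ?_, hyi, by rwa [apply_eq_of_le hην hηi']⟩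
    rw [hagree j hj, apply_eq_of_le hην (η.2 j i hj.le hηi')]

lemma lexLT_iff_left_of_le_of_not_le (hην : η ≤ ν) (hy : ¬ η ≤ y) :
    LexLT ν y ↔ LexLT η y := by
  constructor
  · rintro (h | ⟨i, hagree, hνi, hyi⟩)
    · exact absurd (hην.trans h) hy
    by_cases hηi : η.1 i = none
    · exact absurd (le_of_le_of_agree_below hην hηi hagree) hy
    refine Or.inr ⟨i, fun j hj => ?_, by rwa [← apply_eq_of_le hην hηi], hyi⟩
    rw [← hagree j hj, apply_eq_of_le hην (η.2 j i hj.le hηi)]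
  · rintro (h | ⟨i, hagree, hηi, hyi⟩)
    · exact absurd h hy
    have hηi' : η.1 i ≠ none := by simp [hηi]
    refine Or.inr ⟨i, fun j hj => ?_, by rwa [apply_eq_of_le hην hηi'], hyi⟩
    rw [← hagree j hj, apply_eq_of_le hην (η.2 j i hj.le hηi')]

end Extension

lemma lexLT_of_le {x y : TNode} (h : x ≤ y) : LexLT x y := Or.inl h

lemma not_lexLT_of_lt {x y : TNode} (h : x < y) : ¬ LexLT y x := by
  rintro (h' | ⟨i, -, hyi, hxi⟩)
  · exact h.not_ge h'
  · simpa [hyi] using h.le i true hxi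

end TNode

def SameQFType {r : ℕ} (η ν : Fin r → TNode) : Prop :=
  ∀ φ : treeLang.Formula (Fin r), BoundedFormula.IsQF φ → (φ.Realize η ↔ φ.Realize ν)

lemma SameQFType.trans {r : ℕ} {η ν ρ : Fin r → TNode} (h₁ : SameQFType η ν)
    (h₂ : SameQFType ν ρ) : SameQFType η ρ :=
  fun φ hφ => (h₁ φ hφ).trans (h₂ φ hφ)

/-- The graph of a partial isomorphism of `(TNode, ⊴, <_lex, ∧)` between meet-closed sets. -/
structure IsPartialIso (R : TNode → TNode → Prop) : Prop where
  inf : ∀ {x x' y y'}, R x x' → R y y' → R (x ⊓ y) (x' ⊓ y')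
  eq_iff : ∀ {x x' y y'}, R x x' → R y y' → (x = y ↔ x' = y')
  le_iff : ∀ {x x' y y'}, R x x' → R y y' → (x ≤ y ↔ x' ≤ y')
  lexLT_iff : ∀ {x x' y y'}, R x x' → R y y' → (TNode.LexLT x y ↔ TNode.LexLT x' y')

namespace IsPartialIso

variable {R : TNode → TNode → Prop} (hR : IsPartialIso R)
include hR

lemma realize_term {β : Type*} {w w' : β → TNode} (hw : ∀ b, R (w b) (w' b)) :
    ∀ t : treeLang.Term β, R (t.realize w) (t.realize w') := by
  intro t
  induction t with
  | var b => exact hw b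
  | func f ts ih =>
    obtain ⟨rfl⟩ := f
    exact hR.inf (ih 0) (ih 1)

lemma realize_boundedFormula_iff {α : Type*} {k : ℕ} {φ : treeLang.BoundedFormula α k}
    (hφ : φ.IsQF) {v v' : α → TNode} {xs xs' : Fin k → TNode} (hv : ∀ a, R (v a) (v' a))
    (hxs : ∀ i, R (xs i) (xs' i)) : φ.Realize v xs ↔ φ.Realize v' xs' := by
  have hw : ∀ s, R (Sum.elim v xs s) (Sum.elim v' xs' s) := by
    rintro (a | i)
    exacts [hv a, hxs i]
  induction hφ with
  | falsum => rfl
  | of_isAtomic hatom =>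
    cases hatom with
    | equal t₁ t₂ => exact hR.eq_iff (hR.realize_term hw t₁) (hR.realize_term hw t₂)
    | rel r ts =>
      rcases r with ⟨⟨rfl⟩⟩ | ⟨⟨rfl⟩⟩
      · exact hR.le_iff (hR.realize_term hw (ts 0)) (hR.realize_term hw (ts 1))
      · exact hR.lexLT_iff (hR.realize_term hw (ts 0)) (hR.realize_term hw (ts 1))
  | imp _ _ ih₁ ih₂ => exact imp_congr ih₁ ih₂

lemma sameQFType {r : ℕ} {η ν : Fin r → TNode} (h : ∀ p, R (η p) (ν p)) : SameQFType η ν :=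
  fun _ hφ => hR.realize_boundedFormula_iff hφ h finZeroElim

end IsPartialIso

open TNode

lemma isPartialIso_extend {η ν : TNode} (hην : η ≤ ν) :
    IsPartialIso fun x x' => (x = η ∧ x' = ν) ∨ (x' = x ∧ ¬ η ≤ x) where
  inf := by
    rintro _ _ _ _ (⟨rfl, rfl⟩ | ⟨rfl, hx⟩) (⟨rfl, rfl⟩ | ⟨rfl, hy⟩)
    · exact Or.inl ⟨inf_idem _, inf_idem _⟩
    · exact Or.inr ⟨inf_eq_of_le_of_not_le hην hy, fun h => hy (h.trans inf_le_right)⟩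
    · refine Or.inr ⟨?_, fun h => hx (h.trans inf_le_left)⟩
      rw [inf_comm, inf_eq_of_le_of_not_le hην hx, inf_comm]
    · exact Or.inr ⟨rfl, fun h => hx (h.trans inf_le_left)⟩
  eq_iff := by
    rintro _ _ _ _ (⟨rfl, rfl⟩ | ⟨rfl, hx⟩) (⟨rfl, rfl⟩ | ⟨rfl, hy⟩)
    · exact iff_of_true rfl rfl
    · exact iff_of_false (fun h => hy h.le) (fun h => hy (h ▸ hην))
    · exact iff_of_false (fun h => hx h.ge) (fun h => hx (h ▸ hην))
    · exact Iff.rfl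
  le_iff := by
    rintro _ _ _ _ (⟨rfl, rfl⟩ | ⟨rfl, hx⟩) (⟨rfl, rfl⟩ | ⟨rfl, hy⟩)
    · exact iff_of_true le_rfl le_rfl
    · exact iff_of_false hy fun h => hy (hην.trans h)
    · exact (le_iff_of_le_of_not_le hην hx).symm
    · exact Iff.rfl
  lexLT_iff := by
    rintro _ _ _ _ (⟨rfl, rfl⟩ | ⟨rfl, hx⟩) (⟨rfl, rfl⟩ | ⟨rfl, hy⟩)
    · exact iff_of_true (lexLT_of_le le_rfl) (lexLT_of_le le_rfl)
    · exact (lexLT_iff_left_of_le_of_not_le hην hy).symm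
    · exact (lexLT_iff_right_of_le_of_not_le hην hx).symm
    · exact Iff.rfl

lemma sameQFType_update {r : ℕ} {t : Fin r → TNode} {p : Fin r} {ν : TNode} (hle : t p ≤ ν)
    (hinc : ∀ q ≠ p, ¬ t p ≤ t q) : SameQFType t (Function.update t p ν) := by
  refine (isPartialIso_extend hle).sameQFType fun q => ?_
  by_cases hqp : q = p
  · subst hqp
    exact Or.inl ⟨rfl, by simp⟩
  · exact Or.inr ⟨by simp [hqp], hinc q hqp⟩

lemma sameQFType_of_le_of_not_le {r : ℕ} {η ν : Fin r → TNode} (hle : ∀ p, η p ≤ ν p)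
    (hinc : ∀ p q, p ≠ q → ¬ η p ≤ ν q) : SameQFType η ν := by
  classical
  suffices ∀ s : Finset (Fin r), SameQFType η (s.piecewise ν η) by
    simpa using this Finset.univ
  intro s
  induction s using Finset.induction_on with
  | empty =>
    rw [Finset.piecewise_empty]
    exact fun _ _ => Iff.rfl
  | insert p s hp ih =>
    rw [Finset.piecewise_insert]
    refine ih.trans (sameQFType_update (by simp [hp, hle p]) fun q hqp h => ?_)
    have hq : s.piecewise ν η q ≤ ν q := by
      by_cases hqs : q ∈ s <;> simp [hqs, hle q]
    exact hinc p q (Ne.symm hqp) (by simpa [hp] using h.trans hq)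

lemma isPartialIso_pair {x y x' y' : TNode} (h : x < y) (h' : x' < y') :
    IsPartialIso fun z z' => (z = x ∧ z' = x') ∨ (z = y ∧ z' = y') where
  inf := by
    rintro _ _ _ _ (⟨rfl, rfl⟩ | ⟨rfl, rfl⟩) (⟨rfl, rfl⟩ | ⟨rfl, rfl⟩)
    · exact Or.inl ⟨inf_idem _, inf_idem _⟩
    · exact Or.inl ⟨inf_eq_left.2 h.le, inf_eq_left.2 h'.le⟩
    · exact Or.inl ⟨inf_eq_right.2 h.le, inf_eq_right.2 h'.le⟩
    · exact Or.inr ⟨inf_idem _, inf_idem _⟩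
  eq_iff := by
    rintro _ _ _ _ (⟨rfl, rfl⟩ | ⟨rfl, rfl⟩) (⟨rfl, rfl⟩ | ⟨rfl, rfl⟩)
    · exact iff_of_true rfl rfl
    · exact iff_of_false h.ne h'.ne
    · exact iff_of_false h.ne' h'.ne'
    · exact iff_of_true rfl rfl
  le_iff := by
    rintro _ _ _ _ (⟨rfl, rfl⟩ | ⟨rfl, rfl⟩) (⟨rfl, rfl⟩ | ⟨rfl, rfl⟩)
    · exact iff_of_true le_rfl le_rfl
    · exact iff_of_true h.le h'.le
    · exact iff_of_false h.not_ge h'.not_ge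
    · exact iff_of_true le_rfl le_rfl
  lexLT_iff := by
    rintro _ _ _ _ (⟨rfl, rfl⟩ | ⟨rfl, rfl⟩) (⟨rfl, rfl⟩ | ⟨rfl, rfl⟩)
    · exact iff_of_true (lexLT_of_le le_rfl) (lexLT_of_le le_rfl)
    · exact iff_of_true (lexLT_of_le h.le) (lexLT_of_le h'.le)
    · exact iff_of_false (not_lexLT_of_lt h) (not_lexLT_of_lt h')
    · exact iff_of_true (lexLT_of_le le_rfl) (lexLT_of_le le_rfl)

lemma sameQFType_pair {x y x' y' : TNode} (h : x < y) (h' : x' < y') :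
    SameQFType ![x, y] ![x', y'] :=
  (isPartialIso_pair h h').sameQFType fun p => by
    fin_cases p
    exacts [Or.inl ⟨rfl, rfl⟩, Or.inr ⟨rfl, rfl⟩]

namespace TNode

lemma ofList_injective : Function.Injective ofList := fun _ _ h =>
  List.ext_getElem? (congrFun (congrArg Subtype.val h))

lemma ofList_le_ofList_iff {u w : List Bool} : ofList u ≤ ofList w ↔ u <+: w := by
  rw [List.prefix_iff_getElem?, le_def]
  simp [ofList, List.getElem?_eq_some_iff]

lemma ofList_lt_ofList {u w : List Bool} (h : u <+: w) (hne : u ≠ w) : ofList u < ofList w :=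
  lt_of_le_of_ne (ofList_le_ofList_iff.2 h) (ofList_injective.ne hne)

def branchOfList (l : List Bool) : TNode := ofBranch fun i => l.getD i false

lemma ofList_le_branchOfList (l : List Bool) : ofList l ≤ branchOfList l := by
  intro i b hb
  simp_all [ofList, branchOfList, ofBranch, List.getD_eq_getElem?_getD]

lemma not_ofList_le_branchOfList {u w : List Bool} (h : ¬ TreeComparable u w) :
    ¬ ofList u ≤ branchOfList w := fun hle =>
  h ((le_or_le_of_le hle (ofList_le_branchOfList w)).imp ofList_le_ofList_iff.1
    ofList_le_ofList_iff.1)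

end TNode

section Formulas

variable {M : Type*} [L.Structure M]

/-- `∃ x ⋀_{p < r} ψ(x; y_p)`: consistency of `{ψ(x; y_p) : p < r}`. -/
noncomputable def existsCommonSolution {β γ : Type*} [Finite β] (ψ : L.Formula (β ⊕ γ))
    (r : ℕ) : L.Formula ((Fin r × γ) ⊕ Fin 0) :=
  Formula.iExs β <| Formula.iInf fun p : Fin r =>
    ψ.relabel (Sum.elim Sum.inr fun j => Sum.inl (Sum.inl (p, j)))

lemma realize_existsCommonSolution {β γ : Type*} [Finite β] (ψ : L.Formula (β ⊕ γ)) (r : ℕ)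
    (w : (Fin r × γ) ⊕ Fin 0 → M) :
    (existsCommonSolution ψ r).Realize w ↔
      ∃ b : β → M, ∀ p, ψ.Realize (Sum.elim b fun j => w (Sum.inl (p, j))) := by
  simp only [existsCommonSolution, Formula.realize_iExs, Formula.realize_iInf,
    Formula.realize_relabel]
  refine exists_congr fun b => forall_congr' fun p => iff_of_eq (congrArg _ ?_)
  ext (_ | _) <;> rfl

variable {n m : ℕ}

/-- `x₀, …, x_{k-1}` are pairwise distinct solutions of `φ(x; y)`, where `x_i` is the `i`-th block
of `n` variables among `k * n`. -/
noncomputable def distinctSolutions (φ : L.Formula (Fin n ⊕ Fin m)) (k : ℕ) :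
    L.Formula (Fin (k * n) ⊕ Fin m) :=
  (Formula.iInf fun i : Fin k =>
    φ.relabel (Sum.elim (fun c => Sum.inl (finProdFinEquiv (i, c))) Sum.inr)) ⊓
  Formula.iInf fun ij : {ij : Fin k × Fin k // ij.1 ≠ ij.2} =>
    ∼(Formula.iInf fun c : Fin n =>
      Term.equal (var (Sum.inl (finProdFinEquiv (ij.1.1, c))))
        (var (Sum.inl (finProdFinEquiv (ij.1.2, c)))))

lemma realize_distinctSolutions (φ : L.Formula (Fin n ⊕ Fin m)) (k : ℕ) (b : Fin (k * n) → M)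
    (y : Fin m → M) :
    (distinctSolutions φ k).Realize (Sum.elim b y) ↔
      (∀ i, φ.Realize (Sum.elim (fun c => b (finProdFinEquiv (i, c))) y)) ∧
        Function.Injective fun i c => b (finProdFinEquiv (i, c)) := by
  simp only [distinctSolutions, Formula.realize_inf, Formula.realize_iInf, Formula.realize_relabel,
    Formula.realize_not, Formula.realize_equal, Term.realize_var, Sum.elim_inl]
  refine and_congr (forall_congr' fun i => iff_of_eq (congrArg _ ?_)) ?_
  · ext (_ | _) <;> rfl
  · simp only [Function.Injective, funext_iff, Subtype.forall, Prod.forall]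
    exact ⟨fun h i j hij => by_contra fun hne => h i j hne hij,
      fun h i j hne hij => hne (h hij)⟩

lemma not_realize_distinctSolutions_and {φ : L.Formula (Fin n ⊕ Fin m)} {y y' : Fin m → M}
    {S : Set (Fin n → M)} (hS : S.Finite)
    (hsub : ∀ x, φ.Realize (Sum.elim x y) → φ.Realize (Sum.elim x y') → x ∈ S)
    (b : Fin ((S.ncard + 1) * n) → M) :
    ¬ ((distinctSolutions φ _).Realize (Sum.elim b y) ∧
      (distinctSolutions φ _).Realize (Sum.elim b y')) := by
  rintro ⟨hy, hy'⟩
  rw [realize_distinctSolutions] at hy hy'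
  have := hS.to_subtype
  have hcard := Nat.card_le_card_of_injective (fun i => (⟨_, hsub _ (hy.1 i) (hy'.1 i)⟩ : S))
    fun i j hij => hy.2 (congrArg Subtype.val hij)
  rw [Nat.card_eq_fintype_card, Fintype.card_fin, Nat.card_coe_set_eq] at hcard
  omega

end Formulas

namespace StronglyIndiscernibleOver

variable {M : Type*} [L.Structure M]

section

variable {γ : Type*} {a : TNode → γ → M}
  (hind : StronglyIndiscernibleOver L a (∅ : Set M))
include hind

lemma exists_realize_iff {r : ℕ} {η ν : Fin r → TNode} (h : SameQFType η ν) {β : Type*}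
    [Finite β] (ψ : L.Formula (β ⊕ γ)) :
    (∃ b : β → M, ∀ p, ψ.Realize (Sum.elim b (a (η p)))) ↔
      ∃ b : β → M, ∀ p, ψ.Realize (Sum.elim b (a (ν p))) := by
  simpa only [realize_existsCommonSolution, Sum.elim_inl] using
    hind r η ν h 0 finZeroElim finZeroElim (existsCommonSolution ψ r)

lemma exists_realize_and_iff_of_lt {x y x' y' : TNode} (h : x < y) (h' : x' < y') {β : Type*}
    [Finite β] (ψ : L.Formula (β ⊕ γ)) :
    (∃ b : β → M, ψ.Realize (Sum.elim b (a x)) ∧ ψ.Realize (Sum.elim b (a y))) ↔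
      ∃ b : β → M, ψ.Realize (Sum.elim b (a x')) ∧ ψ.Realize (Sum.elim b (a y')) := by
  simpa [Fin.forall_fin_two] using hind.exists_realize_iff (sameQFType_pair h h') ψ

end

lemma exists_realize_distinctSolutions {n m : ℕ} {a : TNode → Fin m → M}
    (hind : StronglyIndiscernibleOver L a (∅ : Set M)) {φ : L.Formula (Fin n ⊕ Fin m)}
    (hbranches : {b : Fin n → M | ∀ f : ℕ → Bool,
      φ.Realize (Sum.elim b (a (TNode.ofBranch f)))}.Infinite)
    (k : ℕ) {X : Finset (List Bool)} (hX : IsTreeAntichain X) :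
    ∃ b, ∀ l ∈ X, (distinctSolutions φ k).Realize (Sum.elim b (a (ofList l))) := by
  let e : Fin X.card → List Bool := fun p => X.equivFin.symm p
  have hqf : SameQFType (fun p => ofList (e p)) (fun p => branchOfList (e p)) :=
    sameQFType_of_le_of_not_le (fun p => ofList_le_branchOfList _) fun p q hpq =>
      not_ofList_le_branchOfList <| hX _ (X.equivFin.symm p).2 _ (X.equivFin.symm q).2
        fun h => hpq (X.equivFin.symm.injective (Subtype.ext h))
  let s : Fin k → Fin n → M := fun i => hbranches.natEmbedding _ i
  have hs : Function.Injective s := fun i j hij =>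
    Fin.ext ((hbranches.natEmbedding _).injective (Subtype.ext hij))
  obtain ⟨b, hb⟩ := (hind.exists_realize_iff hqf _).2
    ⟨fun x => s (finProdFinEquiv.symm x).1 (finProdFinEquiv.symm x).2, fun p =>
      (realize_distinctSolutions _ _ _ _).2
        ⟨fun i => by
          simp only [Equiv.symm_apply_apply]
          exact (hbranches.natEmbedding _ i).2 _,
          by simpa only [Equiv.symm_apply_apply] using hs⟩⟩
  exact ⟨b, fun l hl => by simpa [e] using hb (X.equivFin ⟨l, hl⟩)⟩

end StronglyIndiscernibleOver

theorem hasATP_of_infinite_branches_finite_paths_general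
    (T : L.Theory)
    (M : Type (max u v)) [L.Structure M] [Nonempty M] (hM : M ⊨ T)
    {n m : ℕ} (φ : L.Formula (Fin n ⊕ Fin m)) (a : TNode → Fin m → M)
    (hind : StronglyIndiscernibleOver L a (∅ : Set M))
    (h1 : {b : Fin n → M | ∀ f : ℕ → Bool,
        φ.Realize (Sum.elim b (a (TNode.ofBranch f)))}.Infinite)
    (h2 : ∀ l : List Bool, {b : Fin n → M |
        φ.Realize (Sum.elim b (a (TNode.ofList l))) ∧
        φ.Realize (Sum.elim b (a (TNode.ofList (l ++ [false]))))}.Finite) :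
    T.HasATP := by
  obtain ⟨S, hS, hsub⟩ : ∃ S : Set (Fin n → M), S.Finite ∧ ∀ x,
      φ.Realize (Sum.elim x (a (ofList []))) →
        φ.Realize (Sum.elim x (a (ofList [false]))) → x ∈ S :=
    ⟨_, h2 [], fun _ hx hx' => ⟨hx, hx'⟩⟩
  let ψ := distinctSolutions φ (S.ncard + 1)
  have comparable_inconsistent : ∀ u w : List Bool, u <+: w → u ≠ w →
      ¬ ∃ b, ψ.Realize (Sum.elim b (a (ofList u))) ∧ ψ.Realize (Sum.elim b (a (ofList w))) := by
    intro u w hpre hne hb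
    obtain ⟨b, hb⟩ := (hind.exists_realize_and_iff_of_lt (ofList_lt_ofList hpre hne)
      (ofList_lt_ofList (List.nil_prefix (l := [false])) (by simp)) ψ).1 hb
    exact not_realize_distinctSolutions_and hS hsub b hb
  have : T.Model M := hM
  refine ⟨Theory.ModelType.of T M, _, m, ψ, fun l => a (ofList l),
    fun X hX => hind.exists_realize_distinctSolutions h1 _ hX, ?_⟩
  rintro u w hne (hpre | hpre) ⟨b, hbu, hbw⟩
  · exact comparable_inconsistent u w hpre hne ⟨b, hbu, hbw⟩
  · exact comparable_inconsistent w u hpre hne.symm ⟨b, hbw, hbu⟩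

/-- **Proposition 2.17**: A complete theory `T` has ATP if there are a formula `φ(x; y)` and a
strongly indiscernible tree `(a_η)_{η ∈ 2^{≤ω}}` in a monster model of `T` such that
(1) `{φ(x; a_η) : η ∈ 2^ω}` has infinitely many realizations, and
(2) `φ(x; a_η) ∧ φ(x; a_{η⌢0})` has only finitely many realizations for every `η ∈ 2^{<ω}`. -/
theorem hasATP_of_infinite_branches_finite_paths
    (T : L.Theory) (hT : T.IsComplete)
    (M : Type (max u v)) [L.Structure M] [Nonempty M] (hM : M ⊨ T)
    (μ : Cardinal.{max u v}) (hμ : Cardinal.continuum < μ) (hsat : Saturated L μ M)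
    {n m : ℕ} (φ : L.Formula (Fin n ⊕ Fin m)) (a : TNode → Fin m → M)
    (hind : StronglyIndiscernibleOver L a (∅ : Set M))
    (h1 : {b : Fin n → M | ∀ f : ℕ → Bool,
        φ.Realize (Sum.elim b (a (TNode.ofBranch f)))}.Infinite)
    (h2 : ∀ l : List Bool, {b : Fin n → M |
        φ.Realize (Sum.elim b (a (TNode.ofList l))) ∧
        φ.Realize (Sum.elim b (a (TNode.ofList (l ++ [false]))))}.Finite) :
    T.HasATP :=
  hasATP_of_infinite_branches_finite_paths_general T M hM φ a hind h1 h2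

end NATPPaper
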